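/- Let rings A and B be separably equivalent with context (P, Q, ν, μ). Then the bimodule ${}_AP_B$ is biseparable: the evaluation map e₁: P ⊗_B Hom_A({}_AP, {}_AA) → A, p ⊗ f ↦ f(p), is a split epimorphism of A-A-bimodules, and the evaluation map e₂: Hom_B(P_B, B_B) ⊗_A P → B, f ⊗ p ↦ f(p), is a split epimorphism of B-B-bimodules. -/

import Mathlib

/-! ### A balanced tensor product of a right module and a left module
over a possibly noncommutative ring, constructed as a quotient of the
`ℤ`-tensor product. -/

open MulOpposite
open scoped TensorProduct

section BalCore

variable (R : Type*) [Ring R] (M : Type*) [AddCommGroup M] [Module Rᵐᵒᵖ M]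
  (N : Type*) [AddCommGroup N] [Module R N]

/-- The subgroup of relations defining the balanced tensor product. -/
def balRel : Submodule ℤ (TensorProduct ℤ M N) :=
  Submodule.span ℤ {x | ∃ (m : M) (r : R) (n : N), x = (op r • m) ⊗ₜ[ℤ] n - m ⊗ₜ[ℤ] (r • n)}

/-- The balanced tensor product `M ⊗[R] N` of a right `R`-module `M` and a
left `R`-module `N`. -/
def Bal : Type _ := TensorProduct ℤ M N ⧸ balRel R M N

noncomputable instance : AddCommGroup (Bal R M N) := Submodule.Quotient.addCommGroup _

variable {M N}

/-- The canonical image of `m ⊗ n` in the balanced tensor product. -/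
noncomputable def Bal.tmul (m : M) (n : N) : Bal R M N := Submodule.Quotient.mk (m ⊗ₜ[ℤ] n)

theorem Bal.add_tmul (m m' : M) (n : N) :
    Bal.tmul R (m + m') n = Bal.tmul R m n + Bal.tmul R m' n := by
  show Submodule.Quotient.mk _ = _
  rw [TensorProduct.add_tmul]
  rfl

theorem Bal.tmul_add (m : M) (n n' : N) :
    Bal.tmul R m (n + n') = Bal.tmul R m n + Bal.tmul R m n' := by
  show Submodule.Quotient.mk _ = _
  rw [TensorProduct.tmul_add]
  rfl

theorem Bal.zero_tmul (n : N) : Bal.tmul R (0 : M) n = 0 := by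
  show Submodule.Quotient.mk _ = _
  rw [TensorProduct.zero_tmul]
  rfl

theorem Bal.tmul_zero (m : M) : Bal.tmul R m (0 : N) = 0 := by
  show Submodule.Quotient.mk _ = _
  rw [TensorProduct.tmul_zero]
  rfl

/-- The fundamental balancing relation `(m · r) ⊗ n = m ⊗ (r · n)`. -/
theorem Bal.op_smul_tmul (m : M) (r : R) (n : N) :
    Bal.tmul R (op r • m) n = Bal.tmul R m (r • n) :=
  (Submodule.Quotient.eq _).2 (Submodule.subset_span ⟨m, r, n, rfl⟩)

theorem Bal.induction_on {C : Bal R M N → Prop} (x : Bal R M N) (zero : C 0)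
    (tmul : ∀ m n, C (Bal.tmul R m n)) (add : ∀ x y, C x → C y → C (x + y)) : C x := by
  obtain ⟨y, rfl⟩ := Submodule.Quotient.mk_surjective _ x
  induction y using TensorProduct.induction_on with
  | zero => exact zero
  | tmul m n => exact tmul m n
  | add a b ha hb =>
      have : (Submodule.Quotient.mk (a + b) : Bal R M N)
          = Submodule.Quotient.mk a + Submodule.Quotient.mk b := rfl
      rw [this]; exact add _ _ ha hb

/-- Lift a balanced biadditive map to the balanced tensor product. -/
noncomputable def Bal.liftFun {T : Type*} [AddCommGroup T] (f : M → N → T)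
    (h1 : ∀ m m' n, f (m + m') n = f m n + f m' n)
    (h2 : ∀ m n n', f m (n + n') = f m n + f m n')
    (h3 : ∀ (m : M) (r : R) (n : N), f (op r • m) n = f m (r • n)) : Bal R M N →+ T :=
  letI f₂ : M →+ N →+ T :=
    AddMonoidHom.mk' (fun m => AddMonoidHom.mk' (f m) (h2 m))
      (fun m m' => AddMonoidHom.ext fun n => h1 m m' n)
  letI bil : M →ₗ[ℤ] N →ₗ[ℤ] T :=
    { toFun := fun m => (f₂ m).toIntLinearMap
      map_add' := fun m m' => LinearMap.ext fun n => by simp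
      map_smul' := fun z m => LinearMap.ext fun n => by
        simp [map_zsmul] }
  ((balRel R M N).liftQ (TensorProduct.lift bil) (by
    rw [balRel, Submodule.span_le]
    rintro x ⟨m, r, n, rfl⟩
    simp only [SetLike.mem_coe, LinearMap.mem_ker, map_sub]
    change TensorProduct.lift bil _ = 0
    rw [map_sub]
    simp [bil, f₂, h3 m r n])).toAddMonoidHom

@[simp] theorem Bal.liftFun_tmul {T : Type*} [AddCommGroup T] (f : M → N → T)
    (h1 : ∀ m m' n, f (m + m') n = f m n + f m' n)
    (h2 : ∀ m n n', f m (n + n') = f m n + f m n')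
    (h3 : ∀ (m : M) (r : R) (n : N), f (op r • m) n = f m (r • n)) (m : M) (n : N) :
    Bal.liftFun R f h1 h2 h3 (Bal.tmul R m n) = f m n := by
  simp [Bal.liftFun, Bal.tmul, Submodule.Quotient.mk]
  rfl

theorem Bal.addHom_ext {T : Type*} [AddCommGroup T] {f g : Bal R M N →+ T}
    (h : ∀ m n, f (Bal.tmul R m n) = g (Bal.tmul R m n)) : f = g := by
  ext x
  refine Bal.induction_on R (C := fun z => f z = g z) x (by simp) h
    (fun x y hx hy => by simp only [map_add]; rw [hx, hy])

end BalCore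
section BalModule

variable (R : Type*) [Ring R] {M : Type*} [AddCommGroup M] [Module Rᵐᵒᵖ M]
  {N : Type*} [AddCommGroup N] [Module R N]

section Left

variable {S : Type*} [Ring S] [Module S M] [SMulCommClass S Rᵐᵒᵖ M]

/-- The left action on the balanced tensor product through the first factor. -/
noncomputable def Bal.lsmulHom (s : S) : Bal R M N →+ Bal R M N :=
  Bal.liftFun R (fun m n => Bal.tmul R (s • m) n)
    (fun m m' n => by
      show Bal.tmul R (s • (m + m')) n = Bal.tmul R (s • m) n + Bal.tmul R (s • m') n
      rw [smul_add, Bal.add_tmul])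
    (fun m n n' => Bal.tmul_add R _ n n')
    (fun m r n => by
      show Bal.tmul R (s • op r • m) n = Bal.tmul R (s • m) (r • n)
      rw [smul_comm, Bal.op_smul_tmul])

theorem Bal.lsmulHom_tmul (s : S) (m : M) (n : N) :
    Bal.lsmulHom R (M := M) (N := N) s (Bal.tmul R m n) = Bal.tmul R (s • m) n :=
  Bal.liftFun_tmul R _ _ _ _ m n

noncomputable instance : SMul S (Bal R M N) := ⟨fun s x => Bal.lsmulHom R s x⟩

theorem Bal.lsmul_tmul (s : S) (m : M) (n : N) :
    s • Bal.tmul R m n = Bal.tmul R (s • m) n :=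
  Bal.lsmulHom_tmul R s m n

theorem Bal.lsmul_one : Bal.lsmulHom R (M := M) (N := N) (1 : S) = AddMonoidHom.id _ :=
  Bal.addHom_ext R fun m n => by
    rw [Bal.lsmulHom_tmul, one_smul, AddMonoidHom.id_apply]

theorem Bal.lsmul_mul (s t : S) :
    Bal.lsmulHom R (M := M) (N := N) (s * t) = (Bal.lsmulHom R s).comp (Bal.lsmulHom R t) :=
  Bal.addHom_ext R fun m n => by
    rw [AddMonoidHom.comp_apply, Bal.lsmulHom_tmul, Bal.lsmulHom_tmul, Bal.lsmulHom_tmul,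
      mul_smul]

theorem Bal.lsmul_addsmul (s t : S) :
    Bal.lsmulHom R (M := M) (N := N) (s + t) = Bal.lsmulHom R s + Bal.lsmulHom R t :=
  Bal.addHom_ext R fun m n => by
    rw [AddMonoidHom.add_apply, Bal.lsmulHom_tmul, Bal.lsmulHom_tmul, Bal.lsmulHom_tmul,
      add_smul, Bal.add_tmul]

theorem Bal.lsmul_zerosmul : Bal.lsmulHom R (M := M) (N := N) (0 : S) = 0 :=
  Bal.addHom_ext R fun m n => by
    rw [Bal.lsmulHom_tmul, zero_smul, Bal.zero_tmul, AddMonoidHom.zero_apply]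

noncomputable instance : Module S (Bal R M N) where
  one_smul x := DFunLike.congr_fun (Bal.lsmul_one R (M := M) (N := N) (S := S)) x
  mul_smul s t x := DFunLike.congr_fun (Bal.lsmul_mul R s t) x
  smul_zero s := (Bal.lsmulHom R (M := M) (N := N) s).map_zero
  smul_add s x y := (Bal.lsmulHom R s).map_add x y
  add_smul s t x := DFunLike.congr_fun (Bal.lsmul_addsmul R s t) x
  zero_smul x := DFunLike.congr_fun (Bal.lsmul_zerosmul R (M := M) (N := N) (S := S)) x

end Left

section Right

variable {S : Type*} [Ring S] [Module Sᵐᵒᵖ N] [SMulCommClass R Sᵐᵒᵖ N]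

/-- The right action on the balanced tensor product through the second factor. -/
noncomputable def Bal.rsmulHom (s : Sᵐᵒᵖ) : Bal R M N →+ Bal R M N :=
  Bal.liftFun R (fun m n => Bal.tmul R m (s • n))
    (fun m m' n => Bal.add_tmul R m m' _)
    (fun m n n' => by
      show Bal.tmul R m (s • (n + n')) = Bal.tmul R m (s • n) + Bal.tmul R m (s • n')
      rw [smul_add, Bal.tmul_add])
    (fun m r n => by
      show Bal.tmul R (op r • m) (s • n) = Bal.tmul R m (s • r • n)
      rw [Bal.op_smul_tmul, smul_comm])

theorem Bal.rsmulHom_tmul (s : Sᵐᵒᵖ) (m : M) (n : N) :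
    Bal.rsmulHom R (M := M) (N := N) s (Bal.tmul R m n) = Bal.tmul R m (s • n) :=
  Bal.liftFun_tmul R _ _ _ _ m n

noncomputable instance : SMul Sᵐᵒᵖ (Bal R M N) := ⟨fun s x => Bal.rsmulHom R s x⟩

theorem Bal.rsmul_tmul (s : Sᵐᵒᵖ) (m : M) (n : N) :
    s • Bal.tmul R m n = Bal.tmul R m (s • n) :=
  Bal.rsmulHom_tmul R s m n

theorem Bal.rsmul_one : Bal.rsmulHom R (M := M) (N := N) (1 : Sᵐᵒᵖ) = AddMonoidHom.id _ :=
  Bal.addHom_ext R fun m n => by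
    rw [Bal.rsmulHom_tmul, one_smul, AddMonoidHom.id_apply]

theorem Bal.rsmul_mul (s t : Sᵐᵒᵖ) :
    Bal.rsmulHom R (M := M) (N := N) (s * t) = (Bal.rsmulHom R s).comp (Bal.rsmulHom R t) :=
  Bal.addHom_ext R fun m n => by
    rw [AddMonoidHom.comp_apply, Bal.rsmulHom_tmul, Bal.rsmulHom_tmul, Bal.rsmulHom_tmul,
      mul_smul]

theorem Bal.rsmul_addsmul (s t : Sᵐᵒᵖ) :
    Bal.rsmulHom R (M := M) (N := N) (s + t) = Bal.rsmulHom R s + Bal.rsmulHom R t :=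
  Bal.addHom_ext R fun m n => by
    rw [AddMonoidHom.add_apply, Bal.rsmulHom_tmul, Bal.rsmulHom_tmul, Bal.rsmulHom_tmul,
      add_smul, Bal.tmul_add]

theorem Bal.rsmul_zerosmul : Bal.rsmulHom R (M := M) (N := N) (0 : Sᵐᵒᵖ) = 0 :=
  Bal.addHom_ext R fun m n => by
    rw [Bal.rsmulHom_tmul, zero_smul, Bal.tmul_zero, AddMonoidHom.zero_apply]

noncomputable instance : Module Sᵐᵒᵖ (Bal R M N) where
  one_smul x := DFunLike.congr_fun (Bal.rsmul_one R (M := M) (N := N) (S := S)) x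
  mul_smul s t x := DFunLike.congr_fun (Bal.rsmul_mul R s t) x
  smul_zero s := (Bal.rsmulHom R (M := M) (N := N) s).map_zero
  smul_add s x y := (Bal.rsmulHom R s).map_add x y
  add_smul s t x := DFunLike.congr_fun (Bal.rsmul_addsmul R s t) x
  zero_smul x := DFunLike.congr_fun (Bal.rsmul_zerosmul R (M := M) (N := N) (S := S)) x

end Right

end BalModule
section HomBimodule

variable {A B P Q : Type*} [Ring A] [Ring B]
  [AddCommGroup P] [Module A P] [Module Bᵐᵒᵖ P] [SMulCommClass A Bᵐᵒᵖ P]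
  [AddCommGroup Q] [Module B Q] [Module Aᵐᵒᵖ Q] [SMulCommClass B Aᵐᵒᵖ Q]

/-- Right multiplication by `b` as a left `A`-module endomorphism of `P`. -/
noncomputable def rmulLinear (b : B) : P →ₗ[A] P where
  toFun p := op b • p
  map_add' := smul_add (op b)
  map_smul' a p := (smul_comm a (op b) p).symm

/-- Left multiplication by `a` as a right `B`-module endomorphism of `P`. -/
noncomputable def lmulLinear (a : A) : P →ₗ[Bᵐᵒᵖ] P where
  toFun p := a • p
  map_add' := smul_add a
  map_smul' b p := smul_comm a b p

/-- The right `A`-action (through the domain) on `Hom_B(P_B, B_B)`: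
`(f · a) p = f (a • p)`. -/
noncomputable instance : Module Aᵐᵒᵖ (P →ₗ[Bᵐᵒᵖ] B) where
  smul a f := f.comp (lmulLinear a.unop)
  one_smul f := LinearMap.ext fun p => by
    show f ((1 : Aᵐᵒᵖ).unop • p) = f p
    rw [unop_one, one_smul]
  mul_smul a a' f := LinearMap.ext fun p => by
    show f ((a * a').unop • p) = f (a'.unop • a.unop • p)
    rw [MulOpposite.unop_mul, mul_smul]
  smul_zero a := LinearMap.ext fun p => rfl
  smul_add a f g := LinearMap.ext fun p => rfl
  add_smul a a' f := LinearMap.ext fun p => by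
    show f ((a + a').unop • p) = f (a.unop • p) + f (a'.unop • p)
    rw [MulOpposite.unop_add, add_smul, map_add]
  zero_smul f := LinearMap.ext fun p => by
    show f ((0 : Aᵐᵒᵖ).unop • p) = 0
    rw [MulOpposite.unop_zero, zero_smul, map_zero]

theorem opSmul_homBB_apply (a : A) (f : P →ₗ[Bᵐᵒᵖ] B) (p : P) :
    (op a • f) p = f (a • p) := rfl

/-- The left `B`-action (through the domain) on `Hom_A({}_A P, {}_A A)`:
`(b · f) p = f (p · b)`. -/
noncomputable instance : Module B (P →ₗ[A] A) where
  smul b f := f.comp (rmulLinear b)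
  one_smul f := LinearMap.ext fun p => by
    show f (op (1 : B) • p) = f p
    rw [op_one, one_smul]
  mul_smul b b' f := LinearMap.ext fun p => by
    show f (op (b * b') • p) = f (op b' • op b • p)
    rw [op_mul, mul_smul]
  smul_zero b := LinearMap.ext fun p => rfl
  smul_add b f g := LinearMap.ext fun p => rfl
  add_smul b b' f := LinearMap.ext fun p => by
    show f (op (b + b') • p) = f (op b • p) + f (op b' • p)
    rw [op_add, add_smul, map_add]
  zero_smul f := LinearMap.ext fun p => by
    show f (op (0 : B) • p) = 0
    rw [op_zero, zero_smul, map_zero]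

theorem smul_homAA_apply (b : B) (f : P →ₗ[A] A) (p : P) :
    (b • f) p = f (op b • p) := rfl

noncomputable instance : SMulCommClass B Aᵐᵒᵖ (P →ₗ[A] A) :=
  ⟨fun _ _ _ => LinearMap.ext fun _ => rfl⟩

noncomputable instance : SMulCommClass B Aᵐᵒᵖ (P →ₗ[Bᵐᵒᵖ] B) :=
  ⟨fun _ _ _ => LinearMap.ext fun _ => rfl⟩

/-- The map `Q → Hom_A({}_A P, {}_A A)`, `q ↦ ν(- ⊗ q)`. -/
noncomputable def nuDual (ν : Bal B P Q →+ A)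
    (hνl : ∀ (a : A) (x : Bal B P Q), ν (a • x) = a * ν x) (q : Q) : P →ₗ[A] A where
  toFun p := ν (Bal.tmul B p q)
  map_add' p p' := by
    show ν (Bal.tmul B (p + p') q) = ν (Bal.tmul B p q) + ν (Bal.tmul B p' q)
    rw [Bal.add_tmul, map_add]
  map_smul' a p := by
    show ν (Bal.tmul B (a • p) q) = a • ν (Bal.tmul B p q)
    rw [← Bal.lsmul_tmul, hνl, smul_eq_mul]

@[simp] theorem nuDual_apply (ν : Bal B P Q →+ A)
    (hνl : ∀ (a : A) (x : Bal B P Q), ν (a • x) = a * ν x) (q : Q) (p : P) :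
    nuDual ν hνl q p = ν (Bal.tmul B p q) := rfl

/-- The map `Q → Hom_B(P_B, B_B)`, `q ↦ μ(q ⊗ -)`. -/
noncomputable def muDual (μ : Bal A Q P →+ B)
    (hμr : ∀ (b : B) (y : Bal A Q P), μ (op b • y) = μ y * b) (q : Q) : P →ₗ[Bᵐᵒᵖ] B where
  toFun p := μ (Bal.tmul A q p)
  map_add' p p' := by
    show μ (Bal.tmul A q (p + p')) = μ (Bal.tmul A q p) + μ (Bal.tmul A q p')
    rw [Bal.tmul_add, map_add]
  map_smul' b p := by
    show μ (Bal.tmul A q (b • p)) = b • μ (Bal.tmul A q p)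
    rw [← Bal.rsmul_tmul, MulOpposite.smul_eq_mul_unop]
    conv_lhs => rw [← MulOpposite.op_unop b]
    rw [hμr]

@[simp] theorem muDual_apply (μ : Bal A Q P →+ B)
    (hμr : ∀ (b : B) (y : Bal A Q P), μ (op b • y) = μ y * b) (q : Q) (p : P) :
    muDual μ hμr q p = μ (Bal.tmul A q p) := rfl

end HomBimodule
section Evaluations

variable {A B P : Type*} [Ring A] [Ring B]
  [AddCommGroup P] [Module A P] [Module Bᵐᵒᵖ P] [SMulCommClass A Bᵐᵒᵖ P]

/-- The evaluation map `P ⊗[B] Hom_A({}_A P, {}_A A) → A`, `p ⊗ f ↦ f p`. -/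
noncomputable def eval₁ (A B P : Type*) [Ring A] [Ring B]
    [AddCommGroup P] [Module A P] [Module Bᵐᵒᵖ P] [SMulCommClass A Bᵐᵒᵖ P] :
    Bal B P (P →ₗ[A] A) →+ A :=
  Bal.liftFun B (fun p f => f p)
    (fun p p' f => map_add f p p')
    (fun p f f' => rfl)
    (fun p b f => rfl)

@[simp] theorem eval₁_tmul (p : P) (f : P →ₗ[A] A) :
    eval₁ A B P (Bal.tmul B p f) = f p :=
  Bal.liftFun_tmul B _ _ _ _ p f

/-- The evaluation map `Hom_B(P_B, B_B) ⊗[A] P → B`, `f ⊗ p ↦ f p`. -/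
noncomputable def eval₂ (A B P : Type*) [Ring A] [Ring B]
    [AddCommGroup P] [Module A P] [Module Bᵐᵒᵖ P] [SMulCommClass A Bᵐᵒᵖ P] :
    Bal A (P →ₗ[Bᵐᵒᵖ] B) P →+ B :=
  Bal.liftFun A (fun f p => f p)
    (fun f f' p => rfl)
    (fun f p p' => map_add f p p')
    (fun f a p => rfl)

@[simp] theorem eval₂_tmul (f : P →ₗ[Bᵐᵒᵖ] B) (p : P) :
    eval₂ A B P (Bal.tmul A f p) = f p :=
  Bal.liftFun_tmul A _ _ _ _ f p

end Evaluations

/-! The pairing `ν` turns each `q ∈ Q` into the `A`-linear form `ν(- ⊗ q)` on `P`, and the induced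
bimodule map `P ⊗_B Q → P ⊗_B Hom_A(P, A)` followed by evaluation is `ν` itself. So any bimodule
section of `ν`, pushed forward along this map, is a bimodule section of `e₁`. Symmetrically, `μ`
turns `q` into `μ(q ⊗ -)` and yields a section of `e₂`. -/

def IsSplitBimoduleEpi {R X : Type*} [Ring R] [AddCommGroup X] [Module R X] [Module Rᵐᵒᵖ X]
    (e : X →+ R) : Prop :=
  (∀ (r : R) (x : X), e (r • x) = r * e x) ∧ (∀ (r : R) (x : X), e (op r • x) = e x * r) ∧
    Function.Surjective e ∧
    ∃ s : R →+ X, (∀ (r c : R), s (r * c) = r • s c) ∧ (∀ (r c : R), s (c * r) = op r • s c) ∧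
      ∀ r : R, e (s r) = r

theorem IsSplitBimoduleEpi.of_comp {R X Y : Type*} [Ring R] [AddCommGroup X] [Module R X]
    [Module Rᵐᵒᵖ X] [AddCommGroup Y] [Module R Y] [Module Rᵐᵒᵖ Y] {e : Y →+ R}
    (hel : ∀ (r : R) (y : Y), e (r • y) = r * e y) (her : ∀ (r : R) (y : Y), e (op r • y) = e y * r)
    {Φ : X →+ Y} (hΦl : ∀ (r : R) (x : X), Φ (r • x) = r • Φ x)
    (hΦr : ∀ (r : R) (x : X), Φ (op r • x) = op r • Φ x) {ν : X →+ R} (hν : ∀ x, e (Φ x) = ν x)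
    (hsplit : ∃ σ : R →+ X, (∀ (r c : R), σ (r * c) = r • σ c) ∧
      (∀ (r c : R), σ (c * r) = op r • σ c) ∧ ∀ r : R, ν (σ r) = r) :
    IsSplitBimoduleEpi e := by
  obtain ⟨σ, hσl, hσr, hνσ⟩ := hsplit
  have hs : ∀ r, e (Φ (σ r)) = r := fun r => (hν _).trans (hνσ r)
  refine ⟨hel, her, fun r => ⟨_, hs r⟩, Φ.comp σ, fun r c => ?_, fun r c => ?_, hs⟩
  · rw [AddMonoidHom.comp_apply, hσl, hΦl, AddMonoidHom.comp_apply]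
  · rw [AddMonoidHom.comp_apply, hσr, hΦr, AddMonoidHom.comp_apply]

namespace Bal

variable (R : Type*) [Ring R] {M : Type*} [AddCommGroup M] [Module Rᵐᵒᵖ M]
  {N : Type*} [AddCommGroup N] [Module R N]

theorem map_smul_of_map_smul_tmul {S X : Type*} [AddCommGroup X] [DistribSMul S (Bal R M N)]
    [DistribSMul S X] (f : Bal R M N →+ X) (s : S)
    (h : ∀ m n, f (s • tmul R m n) = s • f (tmul R m n)) (x : Bal R M N) :
    f (s • x) = s • f x :=
  DFunLike.congr_fun (addHom_ext R (f := f.comp (DistribSMul.toAddMonoidHom _ s))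
    (g := (DistribSMul.toAddMonoidHom X s).comp f) h) x

section lTensor

variable (M) {N' : Type*} [AddCommGroup N'] [Module R N']

noncomputable def lTensor (g : N →ₗ[R] N') : Bal R M N →+ Bal R M N' :=
  liftFun R (fun m n => tmul R m (g n))
    (fun m m' n => add_tmul R m m' _)
    (fun m n n' => by rw [map_add, tmul_add])
    (fun m r n => by rw [map_smul, op_smul_tmul])

variable {M}

@[simp] theorem lTensor_tmul (g : N →ₗ[R] N') (m : M) (n : N) :
    lTensor R M g (tmul R m n) = tmul R m (g n) :=
  liftFun_tmul R _ _ _ _ m n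

theorem lTensor_smul {S : Type*} [Ring S] [Module S M] [SMulCommClass S Rᵐᵒᵖ M]
    (g : N →ₗ[R] N') (s : S) (x : Bal R M N) :
    lTensor R M g (s • x) = s • lTensor R M g x :=
  map_smul_of_map_smul_tmul R _ s (fun m n => by
    rw [lsmul_tmul, lTensor_tmul, lTensor_tmul, lsmul_tmul]) x

theorem lTensor_op_smul {S : Type*} [Ring S] [Module Sᵐᵒᵖ N] [SMulCommClass R Sᵐᵒᵖ N]
    [Module Sᵐᵒᵖ N'] [SMulCommClass R Sᵐᵒᵖ N'] (g : N →ₗ[R] N')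
    (hg : ∀ (s : Sᵐᵒᵖ) (n : N), g (s • n) = s • g n) (s : Sᵐᵒᵖ) (x : Bal R M N) :
    lTensor R M g (s • x) = s • lTensor R M g x :=
  map_smul_of_map_smul_tmul R _ s (fun m n => by
    rw [rsmul_tmul, lTensor_tmul, lTensor_tmul, rsmul_tmul, hg]) x

end lTensor

section rTensor

variable (N) {M' : Type*} [AddCommGroup M'] [Module Rᵐᵒᵖ M']

noncomputable def rTensor (g : M →ₗ[Rᵐᵒᵖ] M') : Bal R M N →+ Bal R M' N :=
  liftFun R (fun m n => tmul R (g m) n)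
    (fun m m' n => by rw [map_add, add_tmul])
    (fun m n n' => tmul_add R _ n n')
    (fun m r n => by rw [map_smul, op_smul_tmul])

variable {N}

@[simp] theorem rTensor_tmul (g : M →ₗ[Rᵐᵒᵖ] M') (m : M) (n : N) :
    rTensor R N g (tmul R m n) = tmul R (g m) n :=
  liftFun_tmul R _ _ _ _ m n

theorem rTensor_op_smul {S : Type*} [Ring S] [Module Sᵐᵒᵖ N] [SMulCommClass R Sᵐᵒᵖ N]
    (g : M →ₗ[Rᵐᵒᵖ] M') (s : Sᵐᵒᵖ) (x : Bal R M N) :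
    rTensor R N g (s • x) = s • rTensor R N g x :=
  map_smul_of_map_smul_tmul R _ s (fun m n => by
    rw [rsmul_tmul, rTensor_tmul, rTensor_tmul, rsmul_tmul]) x

theorem rTensor_smul {S : Type*} [Ring S] [Module S M] [SMulCommClass S Rᵐᵒᵖ M]
    [Module S M'] [SMulCommClass S Rᵐᵒᵖ M'] (g : M →ₗ[Rᵐᵒᵖ] M')
    (hg : ∀ (s : S) (m : M), g (s • m) = s • g m) (s : S) (x : Bal R M N) :
    rTensor R N g (s • x) = s • rTensor R N g x :=
  map_smul_of_map_smul_tmul R _ s (fun m n => by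
    rw [lsmul_tmul, rTensor_tmul, rTensor_tmul, lsmul_tmul, hg]) x

end rTensor

end Bal

section Biseparable

variable {A B P : Type*} [Ring A] [Ring B]
  [AddCommGroup P] [Module A P] [Module Bᵐᵒᵖ P] [SMulCommClass A Bᵐᵒᵖ P]

theorem eval₁_smul (a : A) (x : Bal B P (P →ₗ[A] A)) : eval₁ A B P (a • x) = a * eval₁ A B P x :=
  Bal.map_smul_of_map_smul_tmul B _ a (fun p f => by
    rw [Bal.lsmul_tmul, eval₁_tmul, eval₁_tmul, map_smul]) x

theorem eval₁_op_smul (a : A) (x : Bal B P (P →ₗ[A] A)) :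
    eval₁ A B P (op a • x) = eval₁ A B P x * a :=
  Bal.map_smul_of_map_smul_tmul B _ (op a) (fun p f => by
    rw [Bal.rsmul_tmul, eval₁_tmul, eval₁_tmul, LinearMap.smul_apply]) x

theorem eval₂_smul (b : B) (y : Bal A (P →ₗ[Bᵐᵒᵖ] B) P) :
    eval₂ A B P (b • y) = b * eval₂ A B P y :=
  Bal.map_smul_of_map_smul_tmul A _ b (fun f p => by
    rw [Bal.lsmul_tmul, eval₂_tmul, eval₂_tmul, LinearMap.smul_apply]) y

theorem eval₂_op_smul (b : B) (y : Bal A (P →ₗ[Bᵐᵒᵖ] B) P) :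
    eval₂ A B P (op b • y) = eval₂ A B P y * b :=
  Bal.map_smul_of_map_smul_tmul A _ (op b) (fun f p => by
    rw [Bal.rsmul_tmul, eval₂_tmul, eval₂_tmul, map_smul]) y

section NuDual

variable {Q : Type*} [AddCommGroup Q] [Module B Q]

noncomputable def nuDualₗ (ν : Bal B P Q →+ A)
    (hνl : ∀ (a : A) (x : Bal B P Q), ν (a • x) = a * ν x) : Q →ₗ[B] (P →ₗ[A] A) where
  toFun := nuDual ν hνl
  map_add' q q' := LinearMap.ext fun p => (congrArg ν (Bal.tmul_add B p q q')).trans (map_add ν _ _)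
  map_smul' b q := LinearMap.ext fun p => congrArg ν (Bal.op_smul_tmul B p b q).symm

theorem eval₁_lTensor_nuDualₗ (ν : Bal B P Q →+ A)
    (hνl : ∀ (a : A) (x : Bal B P Q), ν (a • x) = a * ν x) (x : Bal B P Q) :
    eval₁ A B P (Bal.lTensor B P (nuDualₗ ν hνl) x) = ν x :=
  DFunLike.congr_fun (Bal.addHom_ext B (f := (eval₁ A B P).comp (Bal.lTensor B P _)) (g := ν)
    fun p q => by rw [AddMonoidHom.comp_apply, Bal.lTensor_tmul, eval₁_tmul]; rfl) x

theorem nuDual_op_smul [Module Aᵐᵒᵖ Q] [SMulCommClass B Aᵐᵒᵖ Q]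
    (ν : Bal B P Q →+ A)
    (hνl : ∀ (a : A) (x : Bal B P Q), ν (a • x) = a * ν x)
    (hνr : ∀ (a : A) (x : Bal B P Q), ν (op a • x) = ν x * a) (a : Aᵐᵒᵖ) (q : Q) :
    nuDual ν hνl (a • q) = a • nuDual ν hνl q := LinearMap.ext fun p => by
  rw [nuDual_apply, LinearMap.smul_apply, nuDual_apply, ← Bal.rsmul_tmul, ← op_unop a, hνr,
    op_smul_eq_mul]

theorem isSplitBimoduleEpi_eval₁ [Module Aᵐᵒᵖ Q] [SMulCommClass B Aᵐᵒᵖ Q]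
    (ν : Bal B P Q →+ A)
    (hνl : ∀ (a : A) (x : Bal B P Q), ν (a • x) = a * ν x)
    (hνr : ∀ (a : A) (x : Bal B P Q), ν (op a • x) = ν x * a)
    (hνsplit : ∃ σ : A →+ Bal B P Q,
      (∀ (a c : A), σ (a * c) = a • σ c) ∧ (∀ (a c : A), σ (c * a) = op a • σ c) ∧
      ∀ a : A, ν (σ a) = a) :
    IsSplitBimoduleEpi (eval₁ A B P) :=
  IsSplitBimoduleEpi.of_comp eval₁_smul eval₁_op_smul
    (Bal.lTensor_smul B (nuDualₗ ν hνl))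
    (fun a => Bal.lTensor_op_smul B (nuDualₗ ν hνl) (nuDual_op_smul ν hνl hνr) (op a))
    (eval₁_lTensor_nuDualₗ ν hνl)
    hνsplit

end NuDual

section MuDual

variable {Q : Type*} [AddCommGroup Q] [Module Aᵐᵒᵖ Q]

noncomputable def muDualₗ (μ : Bal A Q P →+ B)
    (hμr : ∀ (b : B) (y : Bal A Q P), μ (op b • y) = μ y * b) :
    Q →ₗ[Aᵐᵒᵖ] (P →ₗ[Bᵐᵒᵖ] B) where
  toFun := muDual μ hμr
  map_add' q q' := LinearMap.ext fun p => (congrArg μ (Bal.add_tmul A q q' p)).trans (map_add μ _ _)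
  map_smul' a q := LinearMap.ext fun p => congrArg μ (Bal.op_smul_tmul A q a.unop p)

theorem eval₂_rTensor_muDualₗ (μ : Bal A Q P →+ B)
    (hμr : ∀ (b : B) (y : Bal A Q P), μ (op b • y) = μ y * b) (y : Bal A Q P) :
    eval₂ A B P (Bal.rTensor A P (muDualₗ μ hμr) y) = μ y :=
  DFunLike.congr_fun (Bal.addHom_ext A (f := (eval₂ A B P).comp (Bal.rTensor A P _)) (g := μ)
    fun q p => by rw [AddMonoidHom.comp_apply, Bal.rTensor_tmul, eval₂_tmul]; rfl) y

theorem muDual_smul [Module B Q] [SMulCommClass B Aᵐᵒᵖ Q]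
    (μ : Bal A Q P →+ B)
    (hμl : ∀ (b : B) (y : Bal A Q P), μ (b • y) = b * μ y)
    (hμr : ∀ (b : B) (y : Bal A Q P), μ (op b • y) = μ y * b) (b : B) (q : Q) :
    muDual μ hμr (b • q) = b • muDual μ hμr q := LinearMap.ext fun p => by
  rw [muDual_apply, LinearMap.smul_apply, muDual_apply, ← Bal.lsmul_tmul, hμl, smul_eq_mul]

theorem isSplitBimoduleEpi_eval₂ [Module B Q] [SMulCommClass B Aᵐᵒᵖ Q]
    (μ : Bal A Q P →+ B)
    (hμl : ∀ (b : B) (y : Bal A Q P), μ (b • y) = b * μ y)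
    (hμr : ∀ (b : B) (y : Bal A Q P), μ (op b • y) = μ y * b)
    (hμsplit : ∃ τ : B →+ Bal A Q P,
      (∀ (b c : B), τ (b * c) = b • τ c) ∧ (∀ (b c : B), τ (c * b) = op b • τ c) ∧
      ∀ b : B, μ (τ b) = b) :
    IsSplitBimoduleEpi (eval₂ A B P) :=
  IsSplitBimoduleEpi.of_comp eval₂_smul eval₂_op_smul
    (Bal.rTensor_smul A (muDualₗ μ hμr) (muDual_smul μ hμl hμr))
    (fun b => Bal.rTensor_op_smul A (muDualₗ μ hμr) (op b))
    (eval₂_rTensor_muDualₗ μ hμr)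
    hμsplit

end MuDual

end Biseparable

theorem context_bimodule_is_biseparable_general
    {A B P Q : Type*} [Ring A] [Ring B]
    [AddCommGroup P] [Module A P] [Module Bᵐᵒᵖ P] [SMulCommClass A Bᵐᵒᵖ P]
    [AddCommGroup Q] [Module B Q] [Module Aᵐᵒᵖ Q] [SMulCommClass B Aᵐᵒᵖ Q]
    (ν : Bal B P Q →+ A)
    (hνl : ∀ (a : A) (x : Bal B P Q), ν (a • x) = a * ν x)
    (hνr : ∀ (a : A) (x : Bal B P Q), ν (op a • x) = ν x * a)
    (hνsplit : ∃ σ : A →+ Bal B P Q,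
      (∀ (a c : A), σ (a * c) = a • σ c) ∧ (∀ (a c : A), σ (c * a) = op a • σ c) ∧
      ∀ a : A, ν (σ a) = a)
    (μ : Bal A Q P →+ B)
    (hμl : ∀ (b : B) (y : Bal A Q P), μ (b • y) = b * μ y)
    (hμr : ∀ (b : B) (y : Bal A Q P), μ (op b • y) = μ y * b)
    (hμsplit : ∃ τ : B →+ Bal A Q P,
      (∀ (b c : B), τ (b * c) = b • τ c) ∧ (∀ (b c : B), τ (c * b) = op b • τ c) ∧
      ∀ b : B, μ (τ b) = b)
    :
    ((∀ (a : A) (x : Bal B P (P →ₗ[A] A)), eval₁ A B P (a • x) = a * eval₁ A B P x) ∧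
     (∀ (a : A) (x : Bal B P (P →ₗ[A] A)), eval₁ A B P (op a • x) = eval₁ A B P x * a) ∧
     Function.Surjective (eval₁ A B P) ∧
     ∃ s : A →+ Bal B P (P →ₗ[A] A),
       (∀ (a c : A), s (a * c) = a • s c) ∧ (∀ (a c : A), s (c * a) = op a • s c) ∧
       ∀ a : A, eval₁ A B P (s a) = a) ∧
    ((∀ (b : B) (y : Bal A (P →ₗ[Bᵐᵒᵖ] B) P), eval₂ A B P (b • y) = b * eval₂ A B P y) ∧
     (∀ (b : B) (y : Bal A (P →ₗ[Bᵐᵒᵖ] B) P), eval₂ A B P (op b • y) = eval₂ A B P y * b) ∧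
     Function.Surjective (eval₂ A B P) ∧
     ∃ t : B →+ Bal A (P →ₗ[Bᵐᵒᵖ] B) P,
       (∀ (b c : B), t (b * c) = b • t c) ∧ (∀ (b c : B), t (c * b) = op b • t c) ∧
       ∀ b : B, eval₂ A B P (t b) = b) :=
  ⟨isSplitBimoduleEpi_eval₁ ν hνl hνr hνsplit, isSplitBimoduleEpi_eval₂ μ hμl hμr hμsplit⟩

/-- For separably equivalent rings with context `(P,Q,ν,μ)`, the bimodule
`P` is biseparable: both evaluation maps
`e₁ : P ⊗[B] Hom_A({}_A P, {}_A A) → A` and `e₂ : Hom_B(P_B, B_B) ⊗[A] P → B`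
are split epimorphisms of bimodules. -/
theorem context_bimodule_is_biseparable
    {A B P Q : Type*} [Ring A] [Ring B]
    [AddCommGroup P] [Module A P] [Module Bᵐᵒᵖ P] [SMulCommClass A Bᵐᵒᵖ P]
    [AddCommGroup Q] [Module B Q] [Module Aᵐᵒᵖ Q] [SMulCommClass B Aᵐᵒᵖ Q]
    [Module.Finite A P] [Module.Projective A P]
    [Module.Finite Bᵐᵒᵖ P] [Module.Projective Bᵐᵒᵖ P]
    [Module.Finite B Q] [Module.Projective B Q]
    [Module.Finite Aᵐᵒᵖ Q] [Module.Projective Aᵐᵒᵖ Q]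
    (ν : Bal B P Q →+ A)
    (hνl : ∀ (a : A) (x : Bal B P Q), ν (a • x) = a * ν x)
    (hνr : ∀ (a : A) (x : Bal B P Q), ν (op a • x) = ν x * a)
    (hνsurj : Function.Surjective ν)
    (hνsplit : ∃ σ : A →+ Bal B P Q,
      (∀ (a c : A), σ (a * c) = a • σ c) ∧ (∀ (a c : A), σ (c * a) = op a • σ c) ∧
      ∀ a : A, ν (σ a) = a)
    (μ : Bal A Q P →+ B)
    (hμl : ∀ (b : B) (y : Bal A Q P), μ (b • y) = b * μ y)
    (hμr : ∀ (b : B) (y : Bal A Q P), μ (op b • y) = μ y * b)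
    (hμsurj : Function.Surjective μ)
    (hμsplit : ∃ τ : B →+ Bal A Q P,
      (∀ (b c : B), τ (b * c) = b • τ c) ∧ (∀ (b c : B), τ (c * b) = op b • τ c) ∧
      ∀ b : B, μ (τ b) = b)
    :
    ((∀ (a : A) (x : Bal B P (P →ₗ[A] A)), eval₁ A B P (a • x) = a * eval₁ A B P x) ∧
     (∀ (a : A) (x : Bal B P (P →ₗ[A] A)), eval₁ A B P (op a • x) = eval₁ A B P x * a) ∧
     Function.Surjective (eval₁ A B P) ∧
     ∃ s : A →+ Bal B P (P →ₗ[A] A),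
       (∀ (a c : A), s (a * c) = a • s c) ∧ (∀ (a c : A), s (c * a) = op a • s c) ∧
       ∀ a : A, eval₁ A B P (s a) = a) ∧
    ((∀ (b : B) (y : Bal A (P →ₗ[Bᵐᵒᵖ] B) P), eval₂ A B P (b • y) = b * eval₂ A B P y) ∧
     (∀ (b : B) (y : Bal A (P →ₗ[Bᵐᵒᵖ] B) P), eval₂ A B P (op b • y) = eval₂ A B P y * b) ∧
     Function.Surjective (eval₂ A B P) ∧
     ∃ t : B →+ Bal A (P →ₗ[Bᵐᵒᵖ] B) P,
       (∀ (b c : B), t (b * c) = b • t c) ∧ (∀ (b c : B), t (c * b) = op b • t c) ∧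
       ∀ b : B, eval₂ A B P (t b) = b) :=
  context_bimodule_is_biseparable_general ν hνl hνr hνsplit μ hμl hμr hμsplit
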